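/- If there is an asynchronous transition x → y between two Boolean states of a Boolean model f, then for any J ⊆ {1,…,n} there is a trajectory from x to y in the partial J-most-permissive dynamics of f (of length 1 if the changed coordinate is outside J, of length 2 otherwise). -/

import Mathlib

/-- Activity levels of the most permissive scheme: 0, 1, increasing, decreasing. -/
inductive MPLevel : Type
  | zero | one | inc | dec
deriving DecidableEq

/-- The set γ(x̂) of Boolean states compatible with an m.p. state x̂. -/
def mpGamma {n : ℕ} (x : Fin n → MPLevel) : Set (Fin n → Bool) :=
  {x' | ∀ j, (x j = MPLevel.zero → x' j = false) ∧ (x j = MPLevel.one → x' j = true)}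

/-- The set α(x) of Boolean states compatible with a multivalued state x. -/
def mvAlpha {n : ℕ} (m x : Fin n → ℕ) : Set (Fin n → Bool) :=
  {x' | ∀ j, (x j = 0 → x' j = false) ∧ (x j = m j → x' j = true)}

/-- Coordinatewise embedding of Boolean states into m.p. states. -/
def embBM {n : ℕ} (x : Fin n → Bool) : Fin n → MPLevel :=
  fun j => if x j then MPLevel.one else MPLevel.zero

/-- Embedding of a Boolean state into X = ∏ {0,…,m_j}, sending 1 to m_j. -/
def embX {n : ℕ} (m : Fin n → ℕ) (x : Fin n → Bool) : Fin n → ℕ :=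
  fun j => if x j then m j else 0

/-- Transition of the most permissive dynamics of f at coordinate j0. -/
def mpTransAt {n : ℕ} (f : (Fin n → Bool) → Fin n → Bool) (j0 : Fin n)
    (x y : Fin n → MPLevel) : Prop :=
  (∀ j, j ≠ j0 → y j = x j) ∧
    (((x j0 = MPLevel.zero ∨ x j0 = MPLevel.dec) ∧ (∃ x' ∈ mpGamma x, f x' j0 = true) ∧ y j0 = MPLevel.inc) ∨
     ((x j0 = MPLevel.one ∨ x j0 = MPLevel.inc) ∧ (∃ x' ∈ mpGamma x, f x' j0 = false) ∧ y j0 = MPLevel.dec) ∨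
     (x j0 = MPLevel.inc ∧ y j0 = MPLevel.one) ∨
     (x j0 = MPLevel.dec ∧ y j0 = MPLevel.zero))

/-- Transition of the most permissive dynamics of f. -/
def mpTrans {n : ℕ} (f : (Fin n → Bool) → Fin n → Bool) (x y : Fin n → MPLevel) : Prop :=
  ∃ j0, mpTransAt f j0 x y

/-- Transition of the partial J-most-permissive dynamics of f at coordinate j0. -/
def pmpTransAt {n : ℕ} (J : Set (Fin n)) (f : (Fin n → Bool) → Fin n → Bool) (j0 : Fin n)
    (x y : Fin n → MPLevel) : Prop :=
  (∀ j, j ≠ j0 → y j = x j) ∧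
    (((x j0 = MPLevel.zero ∨ x j0 = MPLevel.dec) ∧ (∃ x' ∈ mpGamma x, f x' j0 = true) ∧ y j0 = MPLevel.inc) ∨
     ((x j0 = MPLevel.one ∨ x j0 = MPLevel.inc) ∧ (∃ x' ∈ mpGamma x, f x' j0 = false) ∧ y j0 = MPLevel.dec) ∨
     (x j0 = MPLevel.inc ∧ y j0 = MPLevel.one) ∨
     (x j0 = MPLevel.dec ∧ y j0 = MPLevel.zero) ∨
     (j0 ∉ J ∧ x j0 = MPLevel.zero ∧ (∃ x' ∈ mpGamma x, f x' j0 = true) ∧ y j0 = MPLevel.one) ∨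
     (j0 ∉ J ∧ x j0 = MPLevel.one ∧ (∃ x' ∈ mpGamma x, f x' j0 = false) ∧ y j0 = MPLevel.zero))

/-- Transition of the partial J-most-permissive dynamics of f. -/
def pmpTrans {n : ℕ} (J : Set (Fin n)) (f : (Fin n → Bool) → Fin n → Bool)
    (x y : Fin n → MPLevel) : Prop :=
  ∃ j0, pmpTransAt J f j0 x y

/-- A state of X_{J m.p.}: coordinates outside J are Boolean. -/
def inXJ {n : ℕ} (J : Set (Fin n)) (x : Fin n → MPLevel) : Prop :=
  ∀ j, j ∉ J → (x j = MPLevel.zero ∨ x j = MPLevel.one)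

/-- Asynchronous transition of a Boolean model f. -/
def asyncTransB {n : ℕ} (f : (Fin n → Bool) → Fin n → Bool) (x y : Fin n → Bool) : Prop :=
  ∃ j0, f x j0 ≠ x j0 ∧ y j0 = f x j0 ∧ ∀ j, j ≠ j0 → y j = x j

/-- Asynchronous transition of a multivalued model h (one coordinate moves by 1 toward its target). -/
def asyncTrans {n : ℕ} (h : (Fin n → ℕ) → Fin n → ℕ) (x y : Fin n → ℕ) : Prop :=
  ∃ j0, h x j0 ≠ x j0 ∧ (∀ j, j ≠ j0 → y j = x j) ∧
    ((x j0 < h x j0 ∧ y j0 = x j0 + 1) ∨ (h x j0 < x j0 ∧ y j0 = x j0 - 1))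

/-- An m.p. state x̂ is compatible with a multivalued state x. -/
def mpCompat {n : ℕ} (m x : Fin n → ℕ) (xh : Fin n → MPLevel) : Prop :=
  ∀ j, (x j = 0 → xh j = MPLevel.zero) ∧ (x j = m j → xh j = MPLevel.one) ∧
    (0 < x j → x j < m j → (xh j = MPLevel.inc ∨ xh j = MPLevel.dec))

/-- h is a multivalued model on X = ∏ {0,…,m_j}: maps X to X, moving each coordinate by at most 1. -/
def isMVModel {n : ℕ} (m : Fin n → ℕ) (h : (Fin n → ℕ) → Fin n → ℕ) : Prop :=
  ∀ x, (∀ j, x j ≤ m j) → ∀ j, h x j ≤ m j ∧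
    (h x j = x j ∨ h x j = x j + 1 ∨ h x j + 1 = x j)

/-- h is a multivalued refinement of the Boolean model f. -/
def isRefinement {n : ℕ} (m : Fin n → ℕ) (f : (Fin n → Bool) → Fin n → Bool)
    (h : (Fin n → ℕ) → Fin n → ℕ) : Prop :=
  ∀ x, (∀ j, x j ≤ m j) → ∀ j,
    (h x j < x j → ∃ x' ∈ mvAlpha m x, f x' j = false ∧ x' j = true) ∧
    (x j < h x j → ∃ x' ∈ mvAlpha m x, f x' j = true ∧ x' j = false)

/-- A literal in a DNF: a regulator index, a polarity, and a threshold (used in the multivalued reading). -/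
structure Lit (n : ℕ) where
  idx : Fin n
  pos : Bool
  thr : ℕ

/-- Boolean evaluation of a literal (threshold ignored). -/
def evalLitB {n : ℕ} (x : Fin n → Bool) (l : Lit n) : Bool :=
  if l.pos then x l.idx else !(x l.idx)

/-- Multivalued evaluation of a literal: x_idx ≥ thr+1 for a positive literal, x_idx < thr+1 otherwise. -/
def evalLitM {n : ℕ} (x : Fin n → ℕ) (l : Lit n) : Bool :=
  if l.pos then decide (l.thr + 1 ≤ x l.idx) else decide (x l.idx < l.thr + 1)

/-- Boolean evaluation of a DNF (list of conjunctive clauses). -/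
def evalDNFB {n : ℕ} (x : Fin n → Bool) (φ : List (List (Lit n))) : Bool :=
  φ.any fun c => c.all (evalLitB x)

/-- Multivalued evaluation of a DNF via the thresholds. -/
def evalDNFM {n : ℕ} (x : Fin n → ℕ) (φ : List (List (Lit n))) : Bool :=
  φ.any fun c => c.all (evalLitM x)

/-- Refinement built from the DNF threshold parameterisation:
h_j(x) = max(0, min(m_j, x_j + H_j(x))) with H_j(x) = +1 iff the multivalued DNF of f_j is true. -/
def hDNF {n : ℕ} (m : Fin n → ℕ) (φ : Fin n → List (List (Lit n)))
    (x : Fin n → ℕ) : Fin n → ℕ :=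
  fun j => if evalDNFM x (φ j) then min (m j) (x j + 1) else x j - 1

/-! An asynchronous step flips a single coordinate `j₀` towards `f x j₀`, and `x` itself witnesses
the γ-condition at `embBM x`. Outside `J` the partial m.p. dynamics may flip `j₀` directly; inside
`J` it passes through the transient level `inc` or `dec`, after which the transient level always
settles to the matching Boolean value. -/

def MPLevel.ofBool (b : Bool) : MPLevel := if b then .one else .zero

def MPLevel.towards (b : Bool) : MPLevel := if b then .inc else .dec

section

variable {n : ℕ}

theorem embBM_apply (x : Fin n → Bool) (j : Fin n) : embBM x j = MPLevel.ofBool (x j) := rfl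

theorem embBM_update (x : Fin n → Bool) (j : Fin n) (b : Bool) :
    embBM (Function.update x j b) = Function.update (embBM x) j (MPLevel.ofBool b) := by
  ext i
  rcases eq_or_ne i j with rfl | hi <;> simp [embBM_apply, Function.update_of_ne, *]

theorem mem_mpGamma_embBM (x : Fin n → Bool) : x ∈ mpGamma (embBM x) := by
  intro j
  cases hx : x j <;> simp [embBM_apply, MPLevel.ofBool, hx]

theorem eq_update_of_asyncStep {f : (Fin n → Bool) → Fin n → Bool} {x y : Fin n → Bool}
    {j0 : Fin n} (hj0 : y j0 = f x j0) (hfix : ∀ j, j ≠ j0 → y j = x j) :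
    y = Function.update x j0 (f x j0) := by
  ext j
  rcases eq_or_ne j j0 with rfl | hj <;> simp [Function.update_of_ne, *]

theorem pmpTransAt_of_mpTransAt {J : Set (Fin n)} {f : (Fin n → Bool) → Fin n → Bool}
    {j0 : Fin n} {x y : Fin n → MPLevel} (h : mpTransAt f j0 x y) : pmpTransAt J f j0 x y := by
  obtain ⟨hfix, hstep | hstep | hstep | hstep⟩ := h
  exacts [⟨hfix, .inl hstep⟩, ⟨hfix, .inr <| .inl hstep⟩, ⟨hfix, .inr <| .inr <| .inl hstep⟩,
    ⟨hfix, .inr <| .inr <| .inr <| .inl hstep⟩]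

section AsyncStep

variable {J : Set (Fin n)} {f : (Fin n → Bool) → Fin n → Bool} {x : Fin n → Bool} {j0 : Fin n}

theorem pmpTransAt_embBM_update_of_not_mem (hJ : j0 ∉ J) (hf : f x j0 ≠ x j0) :
    pmpTransAt J f j0 (embBM x) (embBM (Function.update x j0 (f x j0))) := by
  rw [embBM_update]
  refine ⟨fun j hj => Function.update_of_ne hj _ _, ?_⟩
  have hx := mem_mpGamma_embBM x
  cases hb : f x j0
  · have : x j0 = true := by simpa [hb] using hf.symm
    exact .inr <| .inr <| .inr <| .inr <| .inr
      ⟨hJ, by simp [embBM_apply, MPLevel.ofBool, this], ⟨x, hx, hb⟩, by simp [MPLevel.ofBool]⟩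
  · have : x j0 = false := by simpa [hb] using hf.symm
    exact .inr <| .inr <| .inr <| .inr <| .inl
      ⟨hJ, by simp [embBM_apply, MPLevel.ofBool, this], ⟨x, hx, hb⟩, by simp [MPLevel.ofBool]⟩

theorem mpTransAt_embBM_towards (hf : f x j0 ≠ x j0) :
    mpTransAt f j0 (embBM x) (Function.update (embBM x) j0 (MPLevel.towards (f x j0))) := by
  refine ⟨fun j hj => Function.update_of_ne hj _ _, ?_⟩
  have hx := mem_mpGamma_embBM x
  cases hb : f x j0
  · have : x j0 = true := by simpa [hb] using hf.symm
    exact .inr <| .inl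
      ⟨.inl (by simp [embBM_apply, MPLevel.ofBool, this]), ⟨x, hx, hb⟩, by simp [MPLevel.towards]⟩
  · have : x j0 = false := by simpa [hb] using hf.symm
    exact .inl
      ⟨.inl (by simp [embBM_apply, MPLevel.ofBool, this]), ⟨x, hx, hb⟩, by simp [MPLevel.towards]⟩

end AsyncStep

theorem mpTransAt_towards_ofBool (f : (Fin n → Bool) → Fin n → Bool) (z : Fin n → MPLevel)
    (j0 : Fin n) (b : Bool) :
    mpTransAt f j0 (Function.update z j0 (MPLevel.towards b))
      (Function.update z j0 (MPLevel.ofBool b)) := by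
  refine ⟨fun j hj => by simp [Function.update_of_ne hj], ?_⟩
  cases b
  · exact .inr <| .inr <| .inr ⟨by simp [MPLevel.towards], by simp [MPLevel.ofBool]⟩
  · exact .inr <| .inr <| .inl ⟨by simp [MPLevel.towards], by simp [MPLevel.ofBool]⟩

end

/-- an asynchronous transition x → y of f (changing coordinate j₀) yields a
trajectory from x to y in the partial J-m.p. dynamics: a single transition if j₀ ∉ J,
a two-step trajectory if j₀ ∈ J. -/
theorem async_to_pmp {n : ℕ} (f : (Fin n → Bool) → Fin n → Bool) (J : Set (Fin n))
    (x y : Fin n → Bool) (j0 : Fin n)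
    (h1 : f x j0 ≠ x j0) (h2 : y j0 = f x j0) (h3 : ∀ j, j ≠ j0 → y j = x j) :
    (j0 ∉ J → pmpTrans J f (embBM x) (embBM y)) ∧
    (j0 ∈ J → ∃ z : Fin n → MPLevel,
      pmpTrans J f (embBM x) z ∧ pmpTrans J f z (embBM y)) := by
  obtain rfl := eq_update_of_asyncStep h2 h3
  refine ⟨fun hJ => ⟨j0, pmpTransAt_embBM_update_of_not_mem hJ h1⟩, fun _ => ?_⟩
  refine ⟨Function.update (embBM x) j0 (MPLevel.towards (f x j0)),
    ⟨j0, pmpTransAt_of_mpTransAt (mpTransAt_embBM_towards h1)⟩, ⟨j0, ?_⟩⟩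
  rw [embBM_update]
  exact pmpTransAt_of_mpTransAt (mpTransAt_towards_ofBool f _ j0 _)
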